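/- Let 𝔊 = (G, Parity(ℙ), ψ_colive(Ec)) be a parity game augmented with co-live edges and let G' = (V, E ∖ Ec) (assumed to be a game graph). If σ is a positional Player-0 strategy that is winning from every vertex of V in the (non-augmented) parity game (G', Parity(ℙ)), then σ (regarded as a strategy in G) is winning from every vertex of V in the augmented game 𝔊. -/
import Mathlib


universe u

/-- A two-player game graph: finite-intended vertex set `V`, an ownership function
(`owner v = 0` means `v` is a Player-0 vertex, `owner v = 1` a Player-1 vertex),
and an edge relation such that every vertex has at least one outgoing edge. -/
structure GameGraph (V : Type u) where
  owner : V → Fin 2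
  E : V → V → Prop
  exists_succ : ∀ v, ∃ w, E v w

variable {V : Type u}

/-- A play of the game graph: an infinite sequence of vertices following edges. -/
def IsPlay (G : GameGraph V) (ρ : ℕ → V) : Prop :=
  ∀ k, G.E (ρ k) (ρ (k + 1))

/-- A (history-dependent) strategy: given the list of previously visited
vertices and the current vertex, it chooses a next vertex. -/
abbrev Strategy (V : Type u) := List V → V → V

/-- A strategy of Player `i` is valid if at each Player-`i` vertex it chooses
an edge of the game graph. -/
def StratValid (G : GameGraph V) (i : Fin 2) (σ : Strategy V) : Prop :=
  ∀ (h : List V) (v : V), G.owner v = i → G.E v (σ h v)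

/-- A positional (memoryless) strategy ignores the history. -/
def Positional (σ : Strategy V) : Prop :=
  ∀ (h h' : List V) (v : V), σ h v = σ h' v

/-- A play is compliant with the strategy `σ` of Player `i` (a `σ`-play) if at
every Player-`i` vertex it moves to the vertex chosen by `σ`. -/
def Compliant (G : GameGraph V) (i : Fin 2) (σ : Strategy V) (ρ : ℕ → V) : Prop :=
  ∀ k, G.owner (ρ k) = i → ρ (k + 1) = σ (List.ofFn fun j : Fin k => ρ j.val) (ρ k)

/-- `σ` is a winning strategy for Player `i` from `v`, where `W` is the set of
plays that are winning for Player `i`. -/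
def WinsFrom (G : GameGraph V) (i : Fin 2) (W : Set (ℕ → V)) (σ : Strategy V) (v : V) : Prop :=
  StratValid G i σ ∧
    ∀ ρ : ℕ → V, IsPlay G ρ → Compliant G i σ ρ → ρ 0 = v → ρ ∈ W

/-- The winning region of Player `i`: the vertices from which Player `i` has a
winning strategy. -/
def WinRegion (G : GameGraph V) (i : Fin 2) (W : Set (ℕ → V)) : Set V :=
  {v | ∃ σ, WinsFrom G i W σ v}

/-- A vertex occurs infinitely often along a play. -/
def InfOft (ρ : ℕ → V) (v : V) : Prop := ∀ n, ∃ k, n ≤ k ∧ ρ k = v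

/-- An edge is taken infinitely often along a play. -/
def EdgeInfOft (ρ : ℕ → V) (e : V × V) : Prop :=
  ∀ n, ∃ k, n ≤ k ∧ ρ k = e.1 ∧ ρ (k + 1) = e.2

/-- Parity objective: the maximal priority occurring infinitely often is even. -/
def ParityWin (P : V → ℕ) (ρ : ℕ → V) : Prop :=
  ∃ v, InfOft ρ v ∧ Even (P v) ∧ ∀ w, InfOft ρ w → P w ≤ P v

/-- The set of source vertices of a set of edges. -/
def srcSet (H : Set (V × V)) : Set V := {u | ∃ w, (u, w) ∈ H}

/-- Strong transition co-fairness assumption: every co-live edge is taken only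
finitely often. -/
def psiColive (Ec : Set (V × V)) (ρ : ℕ → V) : Prop :=
  ∀ e ∈ Ec, ¬ EdgeInfOft ρ e

/-- Let `𝔊 = (G, Parity(ℙ), ψ_colive(Ec))` and `G' = (V, E ∖ Ec)`
(assumed to be a game graph). If `σ` is a positional Player-0 strategy winning
from every vertex in the non-augmented parity game `(G', Parity(ℙ))`, then `σ`,
regarded as a strategy in `G`, is winning from every vertex in the augmented
game `𝔊`. -/
theorem stmt2 (V : Type) [Fintype V] (G G' : GameGraph V)
    (d : ℕ) (P : V → ℕ) (hP : ∀ v, P v ≤ d)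
    (Ec : Set (V × V)) (hEc : ∀ e ∈ Ec, G.E e.1 e.2 ∧ G.owner e.1 = 1)
    (howner : ∀ v, G'.owner v = G.owner v)
    (hE' : ∀ u w, G'.E u w ↔ (G.E u w ∧ (u, w) ∉ Ec))
    (σ : Strategy V) (hpos : Positional σ)
    (hwin : ∀ v, WinsFrom G' 0 {ρ | ParityWin P ρ} σ v) :
    ∀ v, WinsFrom G 0 {ρ | psiColive Ec ρ → ParityWin P ρ} σ v := by
  intro v
  obtain ⟨hvalid', _⟩ := hwin v
  constructor
  · intro h u hu
    exact ((hE' u (σ h u)).mp (hvalid' h u ((howner u).trans (hu ▸ rfl)))).1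
  intro ρ hplay hcomp _ hpsi
  -- For each co-live edge, it occurs only finitely often; take a uniform bound N.
  classical
  have hfin : ∀ e : V × V, ∃ n : ℕ, e ∈ Ec → ∀ k, n ≤ k → ¬(ρ k = e.1 ∧ ρ (k + 1) = e.2) := by
    intro e
    by_cases he : e ∈ Ec
    · have := hpsi e he
      rw [EdgeInfOft] at this
      push_neg at this
      obtain ⟨n, hn⟩ := this
      exact ⟨n, fun _ k hk hke => hn k hk hke.1 hke.2⟩
    · exact ⟨0, fun h => absurd h he⟩
  choose f hf using hfin
  set N := Finset.univ.sup f with hN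
  have hnoEc : ∀ k, N ≤ k → (ρ k, ρ (k + 1)) ∉ Ec := by
    intro k hk hmem
    exact hf (ρ k, ρ (k + 1)) hmem k
      (le_trans (Finset.le_sup (Finset.mem_univ _)) hk) ⟨rfl, rfl⟩
  -- shifted play
  set ρ' : ℕ → V := fun k => ρ (k + N) with hρ'
  have hshift : ∀ w, InfOft ρ' w ↔ InfOft ρ w := by
    intro w
    constructor
    · intro h n
      obtain ⟨k, hk, hkw⟩ := h n
      exact ⟨k + N, le_trans hk (Nat.le_add_right _ _), hkw⟩
    · intro h n
      obtain ⟨k, hk, hkw⟩ := h (n + N)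
      refine ⟨k - N, ?_, ?_⟩
      · omega
      · show ρ (k - N + N) = w
        rw [Nat.sub_add_cancel (by omega)]
        exact hkw
  obtain ⟨_, hwinρ⟩ := hwin (ρ N)
  have hplay' : IsPlay G' ρ' := by
    intro k
    show G'.E (ρ (k + N)) (ρ (k + 1 + N))
    rw [hE', show k + 1 + N = k + N + 1 from by omega]
    exact ⟨hplay (k + N), hnoEc (k + N) (Nat.le_add_left _ _)⟩
  have hcomp' : Compliant G' 0 σ ρ' := by
    intro k hk
    have h0 : G.owner (ρ (k + N)) = 0 := (howner _).symm.trans hk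
    have := hcomp (k + N) h0
    show ρ (k + 1 + N) = _
    have heq : k + 1 + N = k + N + 1 := by omega
    rw [heq, this, hpos]
  have hpar : ParityWin P ρ' := hwinρ ρ' hplay' hcomp' (by simp [hρ'])
  obtain ⟨w, hw1, hw2, hw3⟩ := hpar
  exact ⟨w, (hshift w).mp hw1, hw2, fun u hu => hw3 u ((hshift u).mpr hu)⟩
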